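/- Suppose there exist real coefficients α⁺, γ⁺ such that α⁺·T + γ⁺ ≤ g_t(T) for all integers T ∈ {t+1, …, n}, where g_t(T) = Σ_{i=t+1}^{T−1} y_i(T−i)/(T−t) for T ≥ t+2 and g_t(t+1) = 0. Fix t' < t and u < v, and define the affine function f⁺(T) = (α⁺ − (u+2v)/6)·T + t'·(u+2v)/6 − (v−u)/(12(t−t')) + S_t^{t'}/(t−t') + γ⁺ where S_t^{t'} = Σ_{i=t'+1}^{t}(i−t')y_i. If f⁺(t+1) ≥ 0 and f⁺(n) ≥ 0, then for all integers T with t < T ≤ n, C(y_{(t'+1):T}, u, v) ≥ C(y_{(t'+1):t}, u, v) + C(y_{(t+1):T}, v, v). -/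

import Mathlib

open Finset

/-!
Splitting the fit on `(t', T]` at `t` and expanding the squares with the closed forms of
`∑ k` and `∑ k²`, the excess cost `C(t', T; u, v) - C(t', t; u, v) - C(t, T; v, v)` factors,
for any `α⁺, γ⁺`, as `2 (v - u) (T - t) / (T - t')` times `(g_t(T) - (α⁺ T + γ⁺)) + f⁺(T)`.
The first summand is nonnegative by the envelope hypothesis, and the second because `f⁺` is
affine and nonnegative at both ends of `[t + 1, n]`.
-/

/-- Residual sum of squares for fitting `y` on `(a, b]` by the linear
interpolation from value `s1` at time `a` to value `s2` at time `b`. -/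
noncomputable def cost (y : ℕ → ℝ) (a b : ℕ) (s1 s2 : ℝ) : ℝ :=
  ∑ i ∈ Finset.Ioc a b,
    (y i - (s1 + (s2 - s1) * (((i : ℝ) - a) / ((b : ℝ) - a)))) ^ 2

/-- The function `g_t` of Proposition 3 (equal to `0` at `T = t+1`). -/
noncomputable def gfun (y : ℕ → ℝ) (t T : ℕ) : ℝ :=
  ∑ i ∈ Finset.Ioo t T, y i * (((T : ℝ) - i) / ((T : ℝ) - t))

/-- The affine function `f⁺` of Proposition 3. -/
noncomputable def fplus (y : ℕ → ℝ) (t' t : ℕ) (u v αp γp : ℝ) (T : ℝ) : ℝ :=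
  (αp - (u + 2 * v) / 6) * T + (t' : ℝ) * (u + 2 * v) / 6
    - (v - u) / (12 * ((t : ℝ) - t'))
    + (∑ i ∈ Finset.Ioc t' t, ((i : ℝ) - t') * y i) / ((t : ℝ) - t') + γp

section PowerSums

variable {a b : ℕ}

lemma sum_Ioc_sub_eq (hab : a ≤ b) :
    ∑ i ∈ Ioc a b, ((i : ℝ) - a) = ((b : ℝ) - a) * (b - a + 1) / 2 := by
  induction b, hab using Nat.le_induction with
  | base => simp
  | succ b _ ih => rw [sum_Ioc_succ_top (by omega), ih]; push_cast; ring

lemma sum_Ioc_sub_sq_eq (hab : a ≤ b) :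
    ∑ i ∈ Ioc a b, ((i : ℝ) - a) ^ 2
      = ((b : ℝ) - a) * (b - a + 1) * (2 * (b - a) + 1) / 6 := by
  induction b, hab using Nat.le_induction with
  | base => simp
  | succ b _ ih => rw [sum_Ioc_succ_top (by omega), ih]; push_cast; ring

lemma natCast_card_Ioc (hab : a ≤ b) : ((Ioc a b).card : ℝ) = (b : ℝ) - a := by
  rw [Nat.card_Ioc, Nat.cast_sub hab]

lemma sum_Ioc_rsub_eq (hab : a ≤ b) :
    ∑ i ∈ Ioc a b, ((b : ℝ) - i) = ((b : ℝ) - a) * (b - a - 1) / 2 := by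
  have h : ∀ i : ℕ, (b : ℝ) - i = (b - a) - (i - a) := fun i => by ring
  rw [sum_congr rfl fun i _ => h i, sum_sub_distrib,
    sum_const, nsmul_eq_mul, natCast_card_Ioc hab, sum_Ioc_sub_eq hab]
  ring

lemma sum_Ioc_rsub_sq_eq (hab : a ≤ b) :
    ∑ i ∈ Ioc a b, ((b : ℝ) - i) ^ 2
      = ((b : ℝ) - a) * (b - a - 1) * (2 * (b - a) - 1) / 6 := by
  have h : ∀ i : ℕ, ((b : ℝ) - i) ^ 2 = (b - a) ^ 2 - 2 * (b - a) * (i - a) + (i - a) ^ 2 :=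
    fun i => by ring
  rw [sum_congr rfl fun i _ => h i, sum_add_distrib, sum_sub_distrib, sum_const, nsmul_eq_mul,
    natCast_card_Ioc hab, ← mul_sum, sum_Ioc_sub_eq hab, sum_Ioc_sub_sq_eq hab]
  ring

end PowerSums

noncomputable def interp (a b : ℕ) (u v : ℝ) (i : ℕ) : ℝ :=
  u + (v - u) * (((i : ℝ) - a) / ((b : ℝ) - a))

section CostDifference

variable (y : ℕ → ℝ) (u v : ℝ) {a b c : ℕ}

lemma cost_eq_sum_interp (a b : ℕ) :
    cost y a b u v = ∑ i ∈ Ioc a b, (y i - interp a b u v i) ^ 2 := rfl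

lemma cost_const (a b : ℕ) : cost y a b v v = ∑ i ∈ Ioc a b, (y i - v) ^ 2 :=
  sum_congr rfl fun i _ => by ring

lemma sum_Ioc_rsub_mul_eq_gfun (hab : a < b) :
    ∑ i ∈ Ioc a b, ((b : ℝ) - i) * y i = ((b : ℝ) - a) * gfun y a b := by
  have hba : (b : ℝ) - a ≠ 0 := sub_ne_zero.2 (by exact_mod_cast hab.ne')
  rw [gfun, mul_sum, ← Ioo_insert_right hab, sum_insert right_notMem_Ioo, sub_self, zero_mul,
    zero_add]
  exact sum_congr rfl fun i _ => by field_simp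

lemma sum_Ioc_interp_sq_sub_interp_sq (hab : a < b) (hac : a < c) :
    ∑ i ∈ Ioc a b, ((y i - interp a c u v i) ^ 2 - (y i - interp a b u v i) ^ 2)
      = 2 * (v - u) * (1 / ((b : ℝ) - a) - 1 / ((c : ℝ) - a))
          * ∑ i ∈ Ioc a b, ((i : ℝ) - a) * y i
        - (v - u) ^ 2 * (1 / ((b : ℝ) - a) ^ 2 - 1 / ((c : ℝ) - a) ^ 2)
          * ∑ i ∈ Ioc a b, ((i : ℝ) - a) ^ 2
        - 2 * u * (v - u) * (1 / ((b : ℝ) - a) - 1 / ((c : ℝ) - a))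
          * ∑ i ∈ Ioc a b, ((i : ℝ) - a) := by
  have hba : (b : ℝ) - a ≠ 0 := sub_ne_zero.2 (by exact_mod_cast hab.ne')
  have hca : (c : ℝ) - a ≠ 0 := sub_ne_zero.2 (by exact_mod_cast hac.ne')
  simp only [mul_sum, ← sum_sub_distrib]
  exact sum_congr rfl fun i _ => by unfold interp; field_simp; ring

lemma sum_Ioc_interp_sq_sub_const_sq (hac : a < c) :
    ∑ i ∈ Ioc b c, ((y i - interp a c u v i) ^ 2 - (y i - v) ^ 2)
      = 2 * (v - u) / ((c : ℝ) - a) * ∑ i ∈ Ioc b c, ((c : ℝ) - i) * y i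
        + (v - u) ^ 2 / ((c : ℝ) - a) ^ 2 * ∑ i ∈ Ioc b c, ((c : ℝ) - i) ^ 2
        - 2 * v * (v - u) / ((c : ℝ) - a) * ∑ i ∈ Ioc b c, ((c : ℝ) - i) := by
  have hca : (c : ℝ) - a ≠ 0 := sub_ne_zero.2 (by exact_mod_cast hac.ne')
  simp only [mul_sum, ← sum_sub_distrib, ← sum_add_distrib]
  exact sum_congr rfl fun i _ => by unfold interp; field_simp; ring

lemma cost_sub_cost_sub_cost_eq (αp γp : ℝ) (hab : a < b) (hbc : b < c) :
    cost y a c u v - cost y a b u v - cost y b c v v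
      = 2 * (v - u) * ((c : ℝ) - b) / ((c : ℝ) - a)
        * (gfun y b c - (αp * c + γp) + fplus y a b u v αp γp c) := by
  have hac := hab.trans hbc
  have hsplit : cost y a c u v - cost y a b u v - cost y b c v v
      = ∑ i ∈ Ioc a b, ((y i - interp a c u v i) ^ 2 - (y i - interp a b u v i) ^ 2)
        + ∑ i ∈ Ioc b c, ((y i - interp a c u v i) ^ 2 - (y i - v) ^ 2) := by
    rw [cost_eq_sum_interp, cost_eq_sum_interp, cost_const,
      ← sum_Ioc_consecutive _ hab.le hbc.le, sum_sub_distrib, sum_sub_distrib]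
    ring
  have hba : (b : ℝ) - a ≠ 0 := sub_ne_zero.2 (by exact_mod_cast hab.ne')
  have hca : (c : ℝ) - a ≠ 0 := sub_ne_zero.2 (by exact_mod_cast hac.ne')
  rw [hsplit, sum_Ioc_interp_sq_sub_interp_sq y u v hab hac,
    sum_Ioc_interp_sq_sub_const_sq y u v hac,
    sum_Ioc_rsub_mul_eq_gfun y hbc, sum_Ioc_sub_eq hab.le, sum_Ioc_sub_sq_eq hab.le,
    sum_Ioc_rsub_eq hbc.le, sum_Ioc_rsub_sq_eq hbc.le, fplus]
  field_simp
  ring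

end CostDifference

lemma fplus_nonneg_of_mem_Icc (y : ℕ → ℝ) (t' t : ℕ) (u v αp γp : ℝ) {p q x : ℝ}
    (hx : x ∈ Set.Icc p q) (hp : 0 ≤ fplus y t' t u v αp γp p)
    (hq : 0 ≤ fplus y t' t u v αp γp q) : 0 ≤ fplus y t' t u v αp γp x := by
  have affine : (q - p) * fplus y t' t u v αp γp x
      = (q - x) * fplus y t' t u v αp γp p + (x - p) * fplus y t' t u v αp γp q := by
    unfold fplus; ring
  rcases (hx.1.trans hx.2).lt_or_eq with hpq | rfl
  · refine nonneg_of_mul_nonneg_right ?_ (sub_pos.2 hpq)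
    rw [affine]
    exact add_nonneg (mul_nonneg (sub_nonneg.2 hx.2) hp) (mul_nonneg (sub_nonneg.2 hx.1) hq)
  · rwa [le_antisymm hx.2 hx.1]

theorem inequality_pruning_general (y : ℕ → ℝ) (t' t n : ℕ) (h1 : t' < t)
    (u v : ℝ) (huv : u < v) (αp γp : ℝ)
    (henv : ∀ T : ℕ, t + 1 ≤ T → T ≤ n → αp * (T : ℝ) + γp ≤ gfun y t T)
    (hfa : 0 ≤ fplus y t' t u v αp γp ((t : ℝ) + 1))
    (hfb : 0 ≤ fplus y t' t u v αp γp (n : ℝ)) :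
    ∀ T : ℕ, t < T → T ≤ n →
      cost y t' T u v ≥ cost y t' t u v + cost y t T v v := by
  intro T hT hTn
  have hfT : 0 ≤ fplus y t' t u v αp γp T :=
    fplus_nonneg_of_mem_Icc y t' t u v αp γp ⟨by exact_mod_cast hT, by exact_mod_cast hTn⟩
      hfa hfb
  have hgap : 0 ≤ gfun y t T - (αp * T + γp) := sub_nonneg.2 (henv T hT hTn)
  have hscale : 0 ≤ 2 * (v - u) * ((T : ℝ) - t) / ((T : ℝ) - t') := by
    have : (t' : ℝ) < t := by exact_mod_cast h1
    have : (t : ℝ) < T := by exact_mod_cast hT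
    apply div_nonneg <;> nlinarith
  rw [ge_iff_le, ← sub_nonneg, ← sub_sub, cost_sub_cost_sub_cost_eq y u v αp γp h1 hT]
  exact mul_nonneg hscale (add_nonneg hgap hfT)

theorem inequality_pruning (y : ℕ → ℝ) (t' t n : ℕ) (h1 : t' < t) (h2 : t < n)
    (u v : ℝ) (huv : u < v) (αp γp : ℝ)
    (henv : ∀ T : ℕ, t + 1 ≤ T → T ≤ n → αp * (T : ℝ) + γp ≤ gfun y t T)
    (hfa : 0 ≤ fplus y t' t u v αp γp ((t : ℝ) + 1))
    (hfb : 0 ≤ fplus y t' t u v αp γp (n : ℝ)) :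
    ∀ T : ℕ, t < T → T ≤ n →
      cost y t' T u v ≥ cost y t' t u v + cost y t T v v :=
  inequality_pruning_general y t' t n h1 u v huv αp γp henv hfa hfb
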